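/- arXiv:0707.3536 — 2 statements merged into one kernel-verified Lean document; each statement's English description precedes it below -/
import Mathlib

section
/- Let T be a finite tree with n ≥ 3 leaves in which each internal vertex has degree at least 3, and let b be the number of connected components of the subgraph induced on hidden vertices. Then b ≤ (n−3)/3, and this bound is attained: for every n ≥ 6 there exists such a tree with b = ⌊(n−3)/3⌋. -/
/-- The degree of a vertex, as the number of its neighbors. -/
noncomputable def degC {V : Type*} (G : SimpleGraph V) (v : V) : ℕ :=
  {w | G.Adj v w}.ncard

/-- A hidden vertex: an internal (non-leaf) vertex none of whose neighbors
is a leaf. -/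
def IsHidden {V : Type*} (G : SimpleGraph V) (v : V) : Prop :=
  degC G v ≠ 1 ∧ ∀ w : V, G.Adj v w → degC G w ≠ 1

/-!
Split the vertices into the leaves `L`, the hidden vertices `H` and the remaining internal
vertices `E`, and count adjacent pairs between the classes. A leaf is adjacent only to `E` (two
adjacent leaves would form the whole tree), the tree has `|V| - 1` edges and the forest induced on
`H` has `|H| - b` edges. Degree at least `3` on `H` then forces at least `|H| + 2b` edges between
`H` and `E`, so the edge count gives `|E| ≥ |H| + b + 1`; degree at least `3` on `E` gives
`n ≥ |E| + |H| + 2`, and together `n ≥ 2|H| + b + 3 ≥ 3b + 3`.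

For sharpness, `b` pairwise non-adjacent hidden vertices are strung along a caterpillar, each
carrying a pendant vertex with two leaves, and the surplus leaves go to the root.
-/

open Finset SimpleGraph

variable {V : Type*} {G : SimpleGraph V}

namespace SimpleGraph

theorem IsTree.sum_degree_add_two [Fintype V] [DecidableRel G.Adj] (hG : G.IsTree) :
    ∑ v, G.degree v + 2 = 2 * Fintype.card V := by
  rw [sum_degrees_eq_twice_card_edges, ← hG.card_edgeFinset]
  ring

theorem IsAcyclic.sum_degree_add_two_mul_card_connectedComponent [Fintype V]
    [DecidableRel G.Adj] (hG : G.IsAcyclic) :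
    ∑ v, G.degree v + 2 * Nat.card G.ConnectedComponent = 2 * Fintype.card V := by
  classical
  have hcomponent (c : G.ConnectedComponent) :
      ∑ v : c.supp, G.degree v + 2 = 2 * Fintype.card c.supp := by
    have htree : (G.induce c.supp).IsTree := hG.isTree_connectedComponent c
    have hdeg (v : c.supp) : (G.induce c.supp).degree v = G.degree v :=
      degree_induce_of_neighborSet_subset fun _ hw ↦ c.mem_supp_of_adj_mem_supp v.2 hw
    rw [← sum_congr rfl fun v _ ↦ hdeg v]
    exact htree.sum_degree_add_two
  let e : (Σ c : G.ConnectedComponent, c.supp) ≃ V :=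
    Equiv.sigmaFiberEquiv G.connectedComponentMk
  have hsum : ∑ v, G.degree v = ∑ c : G.ConnectedComponent, ∑ v : c.supp, G.degree v :=
    (Fintype.sum_equiv e _ _ fun _ ↦ rfl).symm.trans (Fintype.sum_sigma _)
  have hcard : Fintype.card V = ∑ c : G.ConnectedComponent, Fintype.card c.supp :=
    (Fintype.card_congr e).symm.trans Fintype.card_sigma
  rw [hsum, hcard, Nat.card_eq_fintype_card, mul_sum, ← sum_congr rfl fun c _ ↦ hcomponent c,
    sum_add_distrib, sum_const, card_univ, smul_eq_mul, mul_comm]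

theorem Preconnected.eq_or_eq_of_adj_of_degree_eq_one [G.LocallyFinite] (hG : G.Preconnected)
    {u v : V} (huv : G.Adj u v) (hu : G.degree u = 1) (hv : G.degree v = 1) (w : V) :
    w = u ∨ w = v := by
  have hclosed {x y : V} (hxy : G.Adj x y) : y = u ∨ y = v → x = u ∨ x = v := by
    rintro (rfl | rfl)
    · exact .inr ((degree_eq_one_iff_existsUnique_adj.mp hu).unique hxy.symm huv)
    · exact .inl ((degree_eq_one_iff_existsUnique_adj.mp hv).unique hxy.symm huv.symm)
  obtain ⟨p⟩ := hG w u
  suffices ∀ {x y} (q : G.Walk x y), y = u ∨ y = v → x = u ∨ x = v from this p (.inl rfl)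
  intro x y q
  induction q with
  | nil => exact id
  | cons h _ ih => exact fun hy ↦ hclosed h (ih hy)

theorem Preconnected.not_adj_of_degree_eq_one [Fintype V] [DecidableRel G.Adj]
    (hG : G.Preconnected) (hleaves : 2 < #{v | G.degree v = 1}) {u v : V}
    (hu : G.degree u = 1) (hv : G.degree v = 1) : ¬G.Adj u v := by
  classical
  intro huv
  have hsub : ({v | G.degree v = 1} : Finset V) ⊆ {u, v} := fun w _ ↦ by
    simpa using hG.eq_or_eq_of_adj_of_degree_eq_one huv hu hv w
  have := (card_le_card hsub).trans card_le_two
  omega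

theorem card_connectedComponent_bot :
    Nat.card (⊥ : SimpleGraph V).ConnectedComponent = Nat.card V :=
  (Nat.card_eq_of_bijective _ ⟨fun _ _ h ↦ reachable_bot.mp (ConnectedComponent.exact h),
    Quot.mk_surjective⟩).symm

section Interedges

variable [DecidableRel G.Adj]

theorem card_interedges_eq_sum (s t : Finset V) :
    #(G.interedges s t) = ∑ v ∈ s, #{w ∈ t | G.Adj v w} := by
  simp only [interedges_def, card_filter, sum_product]

theorem card_interedges_comm (s t : Finset V) :
    #(G.interedges s t) = #(G.interedges t s) :=
  have := G.symm
  Rel.card_interedges_comm s t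

theorem card_interedges_union_left [DecidableEq V] {s s' : Finset V} (h : Disjoint s s')
    (t : Finset V) :
    #(G.interedges (s ∪ s') t) = #(G.interedges s t) + #(G.interedges s' t) := by
  simp only [card_interedges_eq_sum, sum_union h]

theorem card_interedges_union_right [DecidableEq V] (s : Finset V) {t t' : Finset V}
    (h : Disjoint t t') :
    #(G.interedges s (t ∪ t')) = #(G.interedges s t) + #(G.interedges s t') := by
  rw [card_interedges_comm, card_interedges_union_left h, card_interedges_comm,
    card_interedges_comm t']

theorem card_interedges_eq_zero {s t : Finset V} (h : ∀ v ∈ s, ∀ w ∈ t, ¬G.Adj v w) :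
    #(G.interedges s t) = 0 := by
  simp only [card_eq_zero, interedges_def, filter_eq_empty_iff, mem_product]
  exact fun x hx ↦ h _ hx.1 _ hx.2

variable [Fintype V]

theorem card_interedges_univ (s : Finset V) :
    #(G.interedges s univ) = ∑ v ∈ s, G.degree v := by
  simp only [card_interedges_eq_sum, ← card_neighborFinset_eq_degree, neighborFinset_eq_filter]

theorem card_interedges_univ_right_eq_add [DecidableEq V] (s : Finset V) {t t' : Finset V}
    (h : Disjoint t t') : #(G.interedges s univ) =
      #(G.interedges s t) + #(G.interedges s t') + #(G.interedges s (t ∪ t')ᶜ) := by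
  rw [← card_interedges_union_right _ h, ← card_interedges_union_right _ disjoint_compl_right,
    union_compl]

theorem card_interedges_univ_left_eq_add [DecidableEq V] {s s' : Finset V} (h : Disjoint s s')
    (t : Finset V) : #(G.interedges univ t) =
      #(G.interedges s t) + #(G.interedges s' t) + #(G.interedges (s ∪ s')ᶜ t) := by
  rw [← card_interedges_union_left h, ← card_interedges_union_left disjoint_compl_right,
    union_compl]

theorem mul_card_le_card_interedges_univ {k : ℕ} {s : Finset V} (h : ∀ v ∈ s, k ≤ G.degree v) :
    k * #s ≤ #(G.interedges s univ) := by
  rw [card_interedges_univ, mul_comm, ← smul_eq_mul]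
  exact card_nsmul_le_sum _ _ _ h

theorem sum_degree_induce [DecidableEq V] (s : Finset V) :
    ∑ v : (s : Set V), (G.induce s).degree v = #(G.interedges s s) := by
  have (v : (s : Set V)) : (G.induce s).degree v = #{w ∈ s | G.Adj v w} := by
    have h := congrArg card (map_neighborFinset_induce (G := G) (s := (s : Set V)) v)
    rw [card_map, card_neighborFinset_eq_degree] at h
    convert h using 2
    ext w
    simp [and_comm]
  rw [sum_congr rfl fun v _ ↦ this v, card_interedges_eq_sum]
  exact sum_coe_sort s fun v ↦ #{w ∈ s | G.Adj v w}

theorem IsAcyclic.card_interedges_add_two_mul_card_connectedComponent_induce [DecidableEq V]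
    (hG : G.IsAcyclic) (s : Finset V) :
    #(G.interedges s s) + 2 * Nat.card (G.induce s).ConnectedComponent = 2 * #s := by
  have := (hG.induce s).sum_degree_add_two_mul_card_connectedComponent
  rwa [sum_degree_induce, ← Set.toFinset_card, toFinset_coe] at this

end Interedges

end SimpleGraph

theorem degC_eq_degree [Fintype V] [DecidableRel G.Adj] (v : V) : degC G v = G.degree v := by
  rw [degC, ← card_neighborFinset_eq_degree, neighborFinset_def, ← Set.ncard_eq_toFinset_card']
  rfl

theorem isHidden_iff [Fintype V] [DecidableRel G.Adj] {v : V} :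
    IsHidden G v ↔ G.degree v ≠ 1 ∧ ∀ w, G.Adj v w → G.degree w ≠ 1 := by
  simp only [IsHidden, degC_eq_degree]

theorem three_mul_card_hidden_components_add_three_le [Fintype V] (hT : G.IsTree)
    (hdeg : ∀ v, degC G v = 1 ∨ 3 ≤ degC G v) (hn : 3 ≤ {v | degC G v = 1}.ncard) :
    3 * Nat.card (G.induce {v | IsHidden G v}).ConnectedComponent + 3
      ≤ {v | degC G v = 1}.ncard := by
  classical
  simp only [degC_eq_degree] at hdeg hn ⊢
  set L : Finset V := {v | G.degree v = 1}
  set H : Finset V := {v | IsHidden G v}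
  set E : Finset V := (L ∪ H)ᶜ
  have hLn : {v | G.degree v = 1}.ncard = #L := by
    rw [Set.ncard_eq_toFinset_card', Set.toFinset_ofPred]
  rw [hLn] at hn ⊢
  rw [show {v | IsHidden G v} = (H : Set V) by simp [H]]
  have hLH : Disjoint L H := disjoint_filter.mpr fun v _ hL hH ↦ (isHidden_iff.mp hH).1 hL
  have hcard : Fintype.card V = #L + #H + #E := by
    rw [← card_univ, ← union_compl (L ∪ H), card_union_of_disjoint disjoint_compl_right,
      card_union_of_disjoint hLH]
  have htree : #(G.interedges univ univ) + 2 = 2 * Fintype.card V := by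
    rw [card_interedges_univ]
    exact hT.sum_degree_add_two
  have hforest := hT.isAcyclic.card_interedges_add_two_mul_card_connectedComponent_induce H
  have hL : #(G.interedges L univ) = #L := by
    rw [card_interedges_univ, card_eq_sum_ones]
    exact sum_congr rfl fun v hv ↦ (mem_filter.mp hv).2
  have hLL : #(G.interedges L L) = 0 :=
    card_interedges_eq_zero fun u hu v hv ↦ hT.connected.preconnected.not_adj_of_degree_eq_one
      hn (mem_filter.mp hu).2 (mem_filter.mp hv).2
  have hHL : #(G.interedges H L) = 0 :=
    card_interedges_eq_zero fun v hv w hw hvw ↦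
      (isHidden_iff.mp (mem_filter.mp hv).2).2 w hvw (mem_filter.mp hw).2
  have hH : 3 * #H ≤ #(G.interedges H univ) := mul_card_le_card_interedges_univ fun v hv ↦
    (hdeg v).resolve_left (isHidden_iff.mp (mem_filter.mp hv).2).1
  have hE : 3 * #E ≤ #(G.interedges E univ) := mul_card_le_card_interedges_univ fun v hv ↦
    (hdeg v).resolve_left fun hv1 ↦ by simp [E, L, hv1] at hv
  have hsplit (X : Finset V) : #(G.interedges X univ) =
      #(G.interedges X L) + #(G.interedges X H) + #(G.interedges X E) :=
    card_interedges_univ_right_eq_add X hLH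
  have hsplit' : #(G.interedges univ univ) =
      #(G.interedges L univ) + #(G.interedges H univ) + #(G.interedges E univ) :=
    card_interedges_univ_left_eq_add hLH univ
  have := hsplit L; have := hsplit H; have := hsplit E
  have := card_interedges_comm (G := G) L H
  have := card_interedges_comm (G := G) L E
  have := card_interedges_comm (G := G) H E
  omega

theorem three_le_degC {v w₁ w₂ w₃ : V} [Finite V] (h₁ : G.Adj v w₁) (h₂ : G.Adj v w₂)
    (h₃ : G.Adj v w₃) (h₁₂ : w₁ ≠ w₂) (h₁₃ : w₁ ≠ w₃) (h₂₃ : w₂ ≠ w₃) : 3 ≤ degC G v := by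
  rw [degC, ← Set.ncard_eq_three.mpr ⟨w₁, w₂, w₃, h₁₂, h₁₃, h₂₃, rfl⟩]
  refine Set.ncard_le_ncard ?_ (Set.toFinite _)
  rintro w (rfl | rfl | rfl) <;> assumption

def parentGraph (N : ℕ) (f : ℕ → ℕ) : SimpleGraph (Fin N) :=
  SimpleGraph.fromRel fun u v ↦ u.val ≠ 0 ∧ v.val = f u.val

section ParentGraph

variable {N : ℕ} {f : ℕ → ℕ}

theorem parentGraph_adj {u v : Fin N} :
    (parentGraph N f).Adj u v ↔
      u ≠ v ∧ (u.val ≠ 0 ∧ v.val = f u.val ∨ v.val ≠ 0 ∧ u.val = f v.val) :=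
  fromRel_adj _ _ _

theorem parentGraph_adj_of_eq (hf : ∀ a, a ≠ 0 → f a < a) {u v : Fin N} (hu : u.val ≠ 0)
    (huv : v.val = f u.val) : (parentGraph N f).Adj u v :=
  parentGraph_adj.mpr ⟨fun h ↦ (hf u hu).ne (by rw [← huv, h]), .inl ⟨hu, huv⟩⟩

theorem parentGraph_connected (hN : 0 < N) (hf : ∀ a, a ≠ 0 → f a < a) :
    (parentGraph N f).Connected := by
  have : Nonempty (Fin N) := ⟨⟨0, hN⟩⟩
  suffices h : ∀ v : Fin N, (parentGraph N f).Reachable v ⟨0, hN⟩ from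
    .mk fun u v ↦ (h u).trans (h v).symm
  intro v
  induction hv : v.val using Nat.strong_induction_on generalizing v with
  | _ a ih =>
    by_cases ha : a = 0
    · rw [show v = ⟨0, hN⟩ from Fin.ext (hv.trans ha)]
    · have hlt : f v.val < v.val := hf _ (hv ▸ ha)
      have hadj := parentGraph_adj_of_eq hf (v := ⟨f v.val, hlt.trans v.isLt⟩) (hv ▸ ha) rfl
      exact hadj.reachable.trans (ih _ (hv ▸ hlt) _ rfl)

/-- The largest vertex of a cycle would have two distinct neighbours on it, both smaller than
itself and hence both equal to its parent. -/
theorem parentGraph_isAcyclic (hf : ∀ a, a ≠ 0 → f a < a) : (parentGraph N f).IsAcyclic := by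
  intro v c hc
  obtain ⟨m, hm, hmax⟩ := c.support.toFinset.exists_max_image Fin.val ⟨v, by simp⟩
  rw [List.mem_toFinset] at hm
  have hlow {w : Fin N} (hw : w ∈ c.support) (hmw : (parentGraph N f).Adj m w) :
      w.val = f m.val := by
    have := hmax w (List.mem_toFinset.mpr hw)
    rcases (parentGraph_adj.mp hmw).2 with ⟨-, h⟩ | ⟨hw0, h⟩
    · exact h
    · exact absurd (h ▸ hf w hw0) this.not_gt
  have hc' := hc.rotate hm
  have hsnd := hlow ((c.mem_support_rotate_iff m hm).mp ((c.rotate m hm).getVert_mem_support 1))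
    ((c.rotate m hm).adj_snd hc'.not_nil)
  have hpen := hlow ((c.mem_support_rotate_iff m hm).mp ((c.rotate m hm).getVert_mem_support _))
    ((c.rotate m hm).adj_penultimate hc'.not_nil).symm
  exact hc'.snd_ne_penultimate (Fin.ext (hsnd.trans hpen.symm))

theorem parentGraph_isTree (hN : 0 < N) (hf : ∀ a, a ≠ 0 → f a < a) :
    (parentGraph N f).IsTree :=
  ⟨parentGraph_connected hN hf, parentGraph_isAcyclic hf⟩

theorem degC_parentGraph_of_childless (hf : ∀ a, a ≠ 0 → f a < a) {v : Fin N} (hv : v.val ≠ 0)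
    (hchild : ∀ w : Fin N, w.val ≠ 0 → f w.val ≠ v.val) : degC (parentGraph N f) v = 1 := by
  have hp : f v.val < N := (hf _ hv).trans v.isLt
  rw [degC, Set.ncard_eq_one]
  refine ⟨⟨f v.val, hp⟩,
    Set.eq_singleton_iff_unique_mem.mpr ⟨parentGraph_adj_of_eq hf hv rfl, ?_⟩⟩
  intro w hw
  rcases (parentGraph_adj.mp hw).2 with ⟨-, h⟩ | ⟨hw0, h⟩
  · exact Fin.ext h
  · exact absurd h.symm (hchild w hw0)

end ParentGraph

/-- Parent map of the extremal tree. For `i < b` the vertices `3i+1, 3i+2, 3i+3` play the roles of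
`hᵢ, yᵢ, zᵢ`: `hᵢ` hangs below `yᵢ₋₁` (below the root `0` when `i = 0`, through the truncated
subtraction `1 - 2 = 0`), and `yᵢ, zᵢ` below `hᵢ`.
Every vertex from `3b+1` on is a leaf: `3b+1` hangs below `y_{b-1}`, the vertices `3b+2, …, 6b+1`
give one leaf to each `yᵢ` and two to each `zᵢ`, and the rest hang below the root. The hidden
vertices are exactly the `hᵢ`, and no two of them are adjacent. -/
def sharpTreeParent (b a : ℕ) : ℕ :=
  if a ≤ 3 * b + 1 then (if a % 3 = 2 then a - 1 else a - 2)
  else if a ≤ 6 * b + 1 then (if (a - 3 * b - 1) % 3 = 0 then a - 3 * b - 1 else a - 3 * b)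
  else 0

def sharpTree (b r : ℕ) : SimpleGraph (Fin (6 * b + 4 + r)) :=
  parentGraph _ (sharpTreeParent b)

section SharpTree

variable {b r : ℕ}

theorem sharpTreeParent_lt (hb : 1 ≤ b) (a : ℕ) (ha : a ≠ 0) : sharpTreeParent b a < a := by
  unfold sharpTreeParent; split_ifs <;> omega

theorem sharpTreeParent_le (a : ℕ) : sharpTreeParent b a ≤ 3 * b := by
  unfold sharpTreeParent; split_ifs <;> omega

theorem le_of_sharpTreeParent_mod_three {a : ℕ} (ha : sharpTreeParent b a % 3 = 1) :
    a ≤ 3 * b := by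
  unfold sharpTreeParent at ha; split_ifs at ha <;> omega

theorem sharpTreeParent_mod_three_ne_one {a : ℕ} (ha : a ≤ 3 * b) (ha1 : a % 3 = 1) :
    sharpTreeParent b a % 3 ≠ 1 := by
  unfold sharpTreeParent; split_ifs <;> omega

theorem sharpTreeParent_three_mul_add {v : ℕ} (hv : v ≤ 3 * b) (hv0 : v ≠ 0)
    (hv1 : v % 3 ≠ 1) : sharpTreeParent b (3 * b + v) = v := by
  unfold sharpTreeParent; split_ifs <;> omega

theorem sharpTreeParent_of_lt {a : ℕ} (ha : 6 * b + 1 < a) : sharpTreeParent b a = 0 := by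
  unfold sharpTreeParent; split_ifs <;> omega

theorem sharpTree_isTree (hb : 1 ≤ b) : (sharpTree b r).IsTree :=
  parentGraph_isTree (by omega) (sharpTreeParent_lt hb)

theorem sharpTree_adj (hb : 1 ≤ b) {u v : Fin (6 * b + 4 + r)} (hu : u.val ≠ 0)
    (huv : sharpTreeParent b u.val = v.val) : (sharpTree b r).Adj u v :=
  parentGraph_adj_of_eq (sharpTreeParent_lt hb) hu huv.symm

theorem degC_sharpTree_of_lt (hb : 1 ≤ b) {v : Fin (6 * b + 4 + r)} (hv : 3 * b < v.val) :
    degC (sharpTree b r) v = 1 :=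
  degC_parentGraph_of_childless (sharpTreeParent_lt hb) (by omega)
    fun w _ ↦ ((sharpTreeParent_le w.val).trans_lt hv).ne

theorem three_le_degC_sharpTree (hb : 1 ≤ b) {v : Fin (6 * b + 4 + r)} (hv : v.val ≤ 3 * b) :
    3 ≤ degC (sharpTree b r) v := by
  obtain ⟨a, ha⟩ := v
  simp only at hv
  have nbr (c : ℕ) (hc : c < 6 * b + 4 + r)
      (hac : a ≠ 0 ∧ sharpTreeParent b a = c ∨ c ≠ 0 ∧ sharpTreeParent b c = a) :
      (sharpTree b r).Adj ⟨a, ha⟩ ⟨c, hc⟩ := by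
    rcases hac with ⟨ha0, hac⟩ | ⟨hc0, hca⟩
    · exact sharpTree_adj hb ha0 hac
    · exact (sharpTree_adj hb hc0 hca).symm
  have hp := sharpTreeParent_lt hb a
  -- three distinct neighbours of the root, of `hᵢ`, of `yᵢ` and of `zᵢ`
  rcases (by omega : a = 0 ∨ a % 3 = 1 ∨ a % 3 = 2 ∨ (a ≠ 0 ∧ a % 3 = 0)) with h | h | h | h <;>
  [refine three_le_degC (nbr 1 ?_ ?_) (nbr (6 * b + 2) ?_ ?_) (nbr (6 * b + 3) ?_ ?_) ?_ ?_ ?_;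
   refine three_le_degC (nbr (sharpTreeParent b a) ?_ ?_) (nbr (a + 1) ?_ ?_)
     (nbr (a + 2) ?_ ?_) ?_ ?_ ?_;
   refine three_le_degC (nbr (sharpTreeParent b a) ?_ ?_) (nbr (a + 2) ?_ ?_)
     (nbr (3 * b + a) ?_ ?_) ?_ ?_ ?_;
   refine three_le_degC (nbr (sharpTreeParent b a) ?_ ?_) (nbr (3 * b + a) ?_ ?_)
     (nbr (3 * b + a + 1) ?_ ?_) ?_ ?_ ?_] <;>
  first
  | omega
  | (simp only [ne_eq, Fin.mk.injEq]; omega)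
  | (unfold sharpTreeParent; split_ifs <;> omega)

theorem degC_sharpTree_eq_one_iff (hb : 1 ≤ b) {v : Fin (6 * b + 4 + r)} :
    degC (sharpTree b r) v = 1 ↔ 3 * b < v.val := by
  refine ⟨fun h ↦ ?_, degC_sharpTree_of_lt hb⟩
  by_contra hv
  have := three_le_degC_sharpTree hb (not_lt.mp hv)
  omega

theorem isHidden_sharpTree_iff (hb : 1 ≤ b) {v : Fin (6 * b + 4 + r)} :
    IsHidden (sharpTree b r) v ↔ v.val ≤ 3 * b ∧ v.val % 3 = 1 := by
  simp only [IsHidden, ne_eq, degC_sharpTree_eq_one_iff hb, not_lt]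
  constructor
  · rintro ⟨hv, hnbr⟩
    refine ⟨hv, by_contra fun hv1 ↦ ?_⟩
    by_cases hv0 : v.val = 0
    · have hadj : (sharpTree b r).Adj v ⟨6 * b + 2, by omega⟩ :=
        (sharpTree_adj hb (by dsimp only; omega)
          (by rw [sharpTreeParent_of_lt (a := 6 * b + 2) (by omega), hv0])).symm
      exact absurd (hnbr _ hadj) (by dsimp only; omega)
    · have hadj : (sharpTree b r).Adj v ⟨3 * b + v, by omega⟩ :=
        (sharpTree_adj hb (by dsimp only; omega) (sharpTreeParent_three_mul_add hv hv0 hv1)).symm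
      exact absurd (hnbr _ hadj) (by dsimp only; omega)
  · rintro ⟨hv, hv1⟩
    refine ⟨hv, fun w hw ↦ ?_⟩
    rcases (parentGraph_adj.mp hw).2 with ⟨-, h⟩ | ⟨-, h⟩
    · exact h ▸ sharpTreeParent_le _
    · exact le_of_sharpTreeParent_mod_three (h ▸ hv1)

theorem sharpTree_induce_hidden_eq_bot (hb : 1 ≤ b) :
    (sharpTree b r).induce {v | IsHidden (sharpTree b r) v} = ⊥ := by
  ext ⟨u, hu⟩ ⟨v, hv⟩
  simp only [comap_adj, Function.Embedding.subtype_apply, bot_adj, iff_false]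
  intro huv
  rw [Set.mem_ofPred_eq, isHidden_sharpTree_iff hb] at hu hv
  rcases (parentGraph_adj.mp huv).2 with ⟨-, h⟩ | ⟨-, h⟩
  · exact sharpTreeParent_mod_three_ne_one hu.1 hu.2 (h ▸ hv.2)
  · exact sharpTreeParent_mod_three_ne_one hv.1 hv.2 (h ▸ hu.2)

theorem ncard_leaves_sharpTree (hb : 1 ≤ b) :
    {v | degC (sharpTree b r) v = 1}.ncard = 3 * b + 3 + r := by
  simp_rw [degC_sharpTree_eq_one_iff hb]
  rw [show {v : Fin (6 * b + 4 + r) | 3 * b < v.val} = Set.Ioi ⟨3 * b, by omega⟩ from rfl,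
    Set.ncard_eq_toFinset_card', Set.toFinset_Ioi, Fin.card_Ioi]
  dsimp only
  omega

theorem card_hidden_components_sharpTree (hb : 1 ≤ b) :
    Nat.card ((sharpTree b r).induce {v | IsHidden (sharpTree b r) v}).ConnectedComponent = b := by
  have hrange : {v | IsHidden (sharpTree b r) v} =
      Set.range fun i : Fin b ↦ (⟨3 * i + 1, by omega⟩ : Fin (6 * b + 4 + r)) := by
    ext v
    simp only [Set.mem_ofPred_eq, isHidden_sharpTree_iff hb, Set.mem_range, Fin.ext_iff]
    constructor
    · rintro ⟨hv, hv1⟩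
      exact ⟨⟨v / 3, by omega⟩, by simp only; omega⟩
    · rintro ⟨i, hi⟩
      omega
  rw [sharpTree_induce_hidden_eq_bot hb, card_connectedComponent_bot, Nat.card_coe_set_eq, hrange,
    Set.ncard_range_of_injective, Nat.card_fin]
  intro i j h
  simp only [Fin.mk.injEq] at h
  omega

end SharpTree

theorem hidden_components_sharp_bound :
    (∀ (V : Type) (_ : Fintype V) (G : SimpleGraph V), G.IsTree →
      (∀ v : V, degC G v = 1 ∨ 3 ≤ degC G v) →
      ∀ n : ℕ, 3 ≤ n → {v : V | degC G v = 1}.ncard = n →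
      ((Nat.card ((G.induce {v : V | IsHidden G v}).ConnectedComponent) : ℝ))
        ≤ ((n : ℝ) - 3) / 3) ∧
    (∀ n : ℕ, 6 ≤ n → ∃ (V : Type) (_ : Fintype V) (G : SimpleGraph V),
      G.IsTree ∧ (∀ v : V, degC G v = 1 ∨ 3 ≤ degC G v) ∧
      {v : V | degC G v = 1}.ncard = n ∧
      Nat.card ((G.induce {v : V | IsHidden G v}).ConnectedComponent) = (n - 3) / 3) := by
  refine ⟨fun V _ G hT hdeg n hn hleaf ↦ ?_, fun n hn ↦ ?_⟩
  · have h := three_mul_card_hidden_components_add_three_le hT hdeg (hleaf ▸ hn)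
    rw [hleaf] at h
    rw [le_div_iff₀ (by norm_num)]
    have : (3 * Nat.card ((G.induce {v | IsHidden G v}).ConnectedComponent) + 3 : ℝ) ≤ n := by
      exact_mod_cast h
    linarith
  · have hb : 1 ≤ (n - 3) / 3 := by omega
    refine ⟨_, inferInstance, sharpTree ((n - 3) / 3) ((n - 3) % 3), sharpTree_isTree hb,
      fun v ↦ ?_, ?_, card_hidden_components_sharpTree hb⟩
    · by_cases hv : 3 * ((n - 3) / 3) < v.val
      · exact .inl (degC_sharpTree_of_lt hb hv)
      · exact .inr (three_le_degC_sharpTree hb (not_lt.mp hv))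
    · rw [ncard_leaves_sharpTree hb]
      omega
end

section
/- An isolated hidden vertex in a tree forces at least 6 leaves: if T is a finite tree in which every vertex has degree 1 or ≥ 3, and v is an internal vertex such that no neighbor of v is a leaf and no neighbor of v is hidden, then T has at least 6 leaves. -/
open Finset

namespace SimpleGraph

variable {V : Type*} {G : SimpleGraph V}

lemma degC_eq_degree [Fintype V] [DecidableRel G.Adj] (v : V) : degC G v = G.degree v := by
  rw [← card_neighborSet_eq_degree, ← Nat.card_eq_fintype_card, Nat.card_coe_set_eq]
  rfl

lemma IsAcyclic.not_adj_of_adj_of_adj (hG : G.IsAcyclic) {a b c : V}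
    (hab : G.Adj a b) (hbc : G.Adj b c) : ¬ G.Adj a c := fun hac => by
  have hdirect : (Walk.cons hac Walk.nil).IsPath := by simp [hac.ne]
  have hdetour : (Walk.cons hab (Walk.cons hbc Walk.nil)).IsPath := by simp [hab.ne, hbc.ne, hac.ne]
  have := congrArg (fun p : G.Path a c => p.1.length)
    ((hG.subsingleton_path a c).elim ⟨_, hdirect⟩ ⟨_, hdetour⟩)
  simp at this

lemma IsAcyclic.eq_of_adj_of_adj_of_adj_of_adj (hG : G.IsAcyclic) {a b c d : V} (hac : a ≠ c)
    (hab : G.Adj a b) (hbc : G.Adj b c) (hcd : G.Adj c d) (hda : G.Adj d a) : b = d := by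
  by_contra hbd
  have hviaA : (Walk.cons hab.symm (Walk.cons hda.symm Walk.nil)).IsPath := by
    simp [hab.ne', hda.ne', hbd]
  have hviaC : (Walk.cons hbc (Walk.cons hcd Walk.nil)).IsPath := by
    simp [hbc.ne, hcd.ne, hbd]
  have := congrArg (fun p : G.Path b d => p.1.support)
    ((hG.subsingleton_path b d).elim ⟨_, hviaA⟩ ⟨_, hviaC⟩)
  simp at this
  exact hac this

variable [Fintype V] [DecidableRel G.Adj]

lemma IsAcyclic.one_add_degree_add_sum_le_card [DecidableEq V] (hG : G.IsAcyclic) (v : V) :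
    1 + G.degree v + ∑ w ∈ G.neighborFinset v, (G.degree w - 1) ≤ Fintype.card V := by
  set N := G.neighborFinset v
  set B := N.biUnion fun w => (G.neighborFinset w).erase v
  have hcardB : #B = ∑ w ∈ N, (G.degree w - 1) := by
    refine card_biUnion (fun w hw w' hw' hne => Finset.disjoint_left.2 fun u hu hu' => ?_)
      |>.trans ?_
    · simp only [mem_erase, mem_neighborFinset] at hu hu'
      exact hne (hG.eq_of_adj_of_adj_of_adj_of_adj (Ne.symm hu.1)
        ((mem_neighborFinset _ _ _).1 hw) hu.2 hu'.2.symm ((mem_neighborFinset _ _ _).1 hw').symm)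
    · refine sum_congr rfl fun w hw => ?_
      rw [card_erase_of_mem ((mem_neighborFinset _ _ _).2 ((mem_neighborFinset _ _ _).1 hw).symm),
        card_neighborFinset_eq_degree]
  have hNB : Disjoint N B := Finset.disjoint_left.2 fun u hu hu' => by
    obtain ⟨w, hw, huw⟩ := mem_biUnion.1 hu'
    exact hG.not_adj_of_adj_of_adj ((mem_neighborFinset _ _ _).1 hw)
      ((mem_neighborFinset _ _ _).1 (mem_erase.1 huw).2)
      ((mem_neighborFinset _ _ _).1 hu)
  have hv : v ∉ N ∪ B := by simp [N, B]
  calc 1 + G.degree v + ∑ w ∈ N, (G.degree w - 1) = #(insert v (N ∪ B)) := by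
        rw [card_insert_of_notMem hv, card_union_of_disjoint hNB, hcardB,
          card_neighborFinset_eq_degree]
        ring
    _ ≤ Fintype.card V := card_le_univ _

lemma IsTree.card_add_two_le_two_mul_card_leaves (hG : G.IsTree)
    (hdeg : ∀ v, G.degree v = 1 ∨ 3 ≤ G.degree v) :
    Fintype.card V + 2 ≤ 2 * #{u | G.degree u = 1} := by
  set L : Finset V := {u | G.degree u = 1}
  set I : Finset V := {u | G.degree u ≠ 1}
  have hLI : #L + #I = Fintype.card V := card_filter_add_card_filter_not _
  have hsumL : ∑ u ∈ L, G.degree u = #L := by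
    rw [sum_congr rfl fun u hu => (mem_filter.1 hu).2, sum_const, smul_eq_mul, mul_one]
  have hsumI : 3 * #I ≤ ∑ u ∈ I, G.degree u := by
    rw [mul_comm, ← smul_eq_mul]
    exact card_nsmul_le_sum _ _ _ fun u hu => (hdeg u).resolve_left (mem_filter.1 hu).2
  have handshake : ∑ u ∈ L, G.degree u + ∑ u ∈ I, G.degree u + 2 = 2 * Fintype.card V := by
    rw [sum_filter_add_sum_filter_not, sum_degrees_eq_twice_card_edges, ← hG.card_edgeFinset]
    ring
  omega

end SimpleGraph

theorem isolated_hidden_vertex_six_leaves_general {V : Type*} [Fintype V]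
    (G : SimpleGraph V) (hT : G.IsTree)
    (hdeg : ∀ v : V, degC G v = 1 ∨ 3 ≤ degC G v)
    (v : V) (hv : degC G v ≠ 1)
    (hnoleaf : ∀ w : V, G.Adj v w → degC G w ≠ 1) :
    6 ≤ {u : V | degC G u = 1}.ncard := by
  classical
  simp only [SimpleGraph.degC_eq_degree] at hdeg hv hnoleaf ⊢
  have hdv : 3 ≤ G.degree v := (hdeg v).resolve_left hv
  have hdw : ∀ w ∈ G.neighborFinset v, 2 ≤ G.degree w - 1 := fun w hw => by
    have := (hdeg w).resolve_left (hnoleaf w ((G.mem_neighborFinset v w).1 hw))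
    omega
  have hball : 10 ≤ Fintype.card V := calc
    10 ≤ 1 + G.degree v + 2 * G.degree v := by omega
    _ = 1 + G.degree v + ∑ _w ∈ G.neighborFinset v, 2 := by simp [mul_comm]
    _ ≤ 1 + G.degree v + ∑ w ∈ G.neighborFinset v, (G.degree w - 1) := by
      gcongr with w hw; exact hdw w hw
    _ ≤ Fintype.card V := hT.isAcyclic.one_add_degree_add_sum_le_card v
  have hleaves := hT.card_add_two_le_two_mul_card_leaves hdeg
  rw [Set.ncard_eq_toFinset_card']
  simp only [Set.toFinset_ofPred]
  omega

theorem isolated_hidden_vertex_six_leaves {V : Type*} [Fintype V]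
    (G : SimpleGraph V) (hT : G.IsTree)
    (hdeg : ∀ v : V, degC G v = 1 ∨ 3 ≤ degC G v)
    (v : V) (hv : degC G v ≠ 1)
    (hnoleaf : ∀ w : V, G.Adj v w → degC G w ≠ 1)
    (hnohidden : ∀ w : V, G.Adj v w → ¬ IsHidden G w) :
    6 ≤ {u : V | degC G u = 1}.ncard :=
  isolated_hidden_vertex_six_leaves_general G hT hdeg v hv hnoleaf
end
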